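/- arXiv:2110.08738 — 3 statements merged into one kernel-verified Lean document; each statement's English description precedes it below -/
import Mathlib

section
/- Let G be a finite simple graph without isolated vertices, and let e⁺ be the bijection between decorations of the trimming T(G) and decorations of the induced subgraph G′ of G (viewed as decorations of G) induced by the subscript-dropping homomorphism e. Then e⁺ restricts to a bijection from the set of states of T(G) to the set of dormant states of G; moreover this bijection respects inclusion of states and the follower relation: for states X, X′ of T(G), X′ is a follower of X in T(G) if and only if e⁺(X′) is a dormant follower of e⁺(X) in G. Consequently, the Trimmed Game of Arrows on T(G) is equivalent to the Game of Arrows on G (the game trees from corresponding positions are isomorphic). -/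
/-!
The subscript-dropping map `e` is a graph homomorphism `T(G) → G` which is injective on
arrows and whose image consists exactly of the arrows of `G` between internal vertices.
The vertices `a_x` of `T(G)` are leaves of `T(G)`, and at each remaining vertex `x` the map `e` is
a bijection from the neighbours of `x` onto those of `e x`, so sinks and sources of `X` and
of `e⁺ X` correspond there. The other vertices of `G` are leaves or adjacent to a leaf, and
`e⁺ X` has no arrow at a leaf, so they are never sinks or sources of `e⁺ X`; conversely a
dormant state of `G` puts no arrow on an edge at a leaf, so it lies in the image of `e⁺`.
Injectivity on arrows makes `e⁺` injective, inclusion-reflecting and compatible with adding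
a single arrow.
-/

/-- A decoration of a graph `G`: a set of arrows drawn on edges of `G`,
at most one per edge. -/
def IsDecoration {V : Type*} (G : SimpleGraph V) (X : Set (V × V)) : Prop :=
  (∀ p ∈ X, G.Adj p.1 p.2) ∧ (∀ p ∈ X, Prod.swap p ∉ X)

/-- `w` is a sink of the decoration `X`. -/
def IsSink {V : Type*} (G : SimpleGraph V) (X : Set (V × V)) (w : V) : Prop :=
  ∀ v, G.Adj v w → (v, w) ∈ X

/-- `v` is a source of the decoration `X`. -/
def IsSource {V : Type*} (G : SimpleGraph V) (X : Set (V × V)) (v : V) : Prop :=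
  ∀ w, G.Adj v w → (v, w) ∈ X

/-- A leaf is a vertex of degree one. -/
def IsLeaf {V : Type*} (G : SimpleGraph V) (v : V) : Prop :=
  ∃! w, G.Adj v w

/-- A state: a decoration with no sinks or sources at internal (non-leaf) vertices. -/
def IsState {V : Type*} (G : SimpleGraph V) (X : Set (V × V)) : Prop :=
  IsDecoration G X ∧ ∀ v, ¬ IsLeaf G v → ¬ IsSink G X v ∧ ¬ IsSource G X v

/-- `X'` is a follower of the state `X`: a state obtained from `X` by adding one arrow. -/
def Follower {V : Type*} (G : SimpleGraph V) (X X' : Set (V × V)) : Prop :=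
  IsState G X ∧ IsState G X' ∧ ∃ p, p ∉ X ∧ X' = insert p X

/-- `X'` is a descendent of `X`: obtained from `X` by one or more follower steps. -/
def Descendent {V : Type*} (G : SimpleGraph V) (X X' : Set (V × V)) : Prop :=
  Relation.TransGen (Follower G) X X'

/-- `p` is an arrow of the subgraph `U(X)` of `G` induced by the edges unmarked in `X`. -/
def UnmarkedArrow {V : Type*} (G : SimpleGraph V) (X : Set (V × V)) (p : V × V) : Prop :=
  G.Adj p.1 p.2 ∧ p ∉ X ∧ Prod.swap p ∉ X

/-- `v` is a vertex of the subgraph `U(X)` of `G` induced by the unmarked edges of `X`. -/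
def UnmarkedVert {V : Type*} (G : SimpleGraph V) (X : Set (V × V)) (v : V) : Prop :=
  ∃ w, UnmarkedArrow G X (v, w)

/-- The map `a⁺` on decorations containing `X` induced by the arrow map `a`:
`a⁺(X*) = Y ∪ a(X* \ X)`. -/
def aPlus {V W : Type*} (a : V × V → W × W) (X : Set (V × V)) (Y : Set (W × W))
    (X' : Set (V × V)) : Set (W × W) :=
  Y ∪ a '' (X' \ X)

/-- A state isomorphism from a state `X` of `G` to a state `Y` of `H`: a bijection `a`
from the arrows of `U(X)` to the arrows of `U(Y)` commuting with the flip operation,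
such that the induced map `a⁺` on decorations restricts to a bijection from the
descendents of `X` to the descendents of `Y`. -/
def IsStateIso {V W : Type*} (G : SimpleGraph V) (H : SimpleGraph W)
    (X : Set (V × V)) (Y : Set (W × W)) (a : V × V → W × W) : Prop :=
  Set.BijOn a {p | UnmarkedArrow G X p} {q | UnmarkedArrow H Y q} ∧
  (∀ p, UnmarkedArrow G X p → a (Prod.swap p) = Prod.swap (a p)) ∧
  Set.BijOn (aPlus a X Y) {X' | Descendent G X X'} {Y' | Descendent H Y Y'}

/-- A dormant state: a state with no sinks or sources at any vertex
(leaves included). -/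
def IsDormant {V : Type*} (G : SimpleGraph V) (X : Set (V × V)) : Prop :=
  IsState G X ∧ ∀ v, ¬ IsSink G X v ∧ ¬ IsSource G X v

/-- `X'` is a dormant follower of the dormant state `X`: a dormant state obtained
from `X` by adding one arrow. -/
def DormantFollower {V : Type*} (G : SimpleGraph V) (X X' : Set (V × V)) : Prop :=
  IsDormant G X ∧ IsDormant G X' ∧ ∃ p, p ∉ X ∧ X' = insert p X

/-- Vertex set of the ramification `R_K(Γ)` of a graph `Γ` at a set `K` of vertices:
the vertices of `Γ` not in `K`, together with a vertex `a_x` for each `a ∈ K` and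
each neighbor `x` of `a` (encoded as the pair `(a, x)`). -/
abbrev RamV {U : Type*} (Γ : SimpleGraph U) (K : Set U) : Type _ :=
  {v : U // v ∉ K} ⊕ {p : U × U // p.1 ∈ K ∧ Γ.Adj p.1 p.2}

/-- The ramification `R_K(Γ)` of `Γ` at `K`: its edges are the edges of `Γ - K`,
the edges `{a_x, x}` for `a ∈ K`, `x ∉ K`, `{a,x} ∈ E(Γ)`, and the edges
`{a_b, b_a}` for `a, b ∈ K`, `{a,b} ∈ E(Γ)`. -/
def Ramification {U : Type*} (Γ : SimpleGraph U) (K : Set U) :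
    SimpleGraph (RamV Γ K) :=
  SimpleGraph.fromRel (fun v w =>
    match v, w with
    | Sum.inl x, Sum.inl y => Γ.Adj x.val y.val
    | Sum.inr a, Sum.inl x => a.val.2 = x.val
    | Sum.inl x, Sum.inr a => a.val.2 = x.val
    | Sum.inr a, Sum.inr b => a.val.2 = b.val.1 ∧ b.val.2 = a.val.1 ∧ a.val.2 ∈ K)

/-- The subgraph `G′` of `G` induced by the internal (non-leaf) vertices of `G`. -/
def Gprime {V : Type*} (G : SimpleGraph V) : SimpleGraph ↥{v : V | ¬ IsLeaf G v} :=
  SimpleGraph.induce {v : V | ¬ IsLeaf G v} G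

/-- The set `K` of internal vertices of `G` that are adjacent to a leaf of `G`,
as a subset of the vertices of `G′`. -/
def trimK {V : Type*} (G : SimpleGraph V) : Set ↥{v : V | ¬ IsLeaf G v} :=
  {v | ∃ l, IsLeaf G l ∧ G.Adj v.val l}

/-- The vertex type of the trimming `T(G)`. -/
abbrev TrimV {V : Type*} (G : SimpleGraph V) : Type _ := RamV (Gprime G) (trimK G)

/-- The trimming `T(G) = R_K(G′)` of `G`. -/
def Trimming {V : Type*} (G : SimpleGraph V) : SimpleGraph (TrimV G) :=
  Ramification (Gprime G) (trimK G)

/-- The subscript-dropping map `e` on vertices, from `T(G)` to (the internal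
vertices of) `G`. -/
def trimDrop {V : Type*} (G : SimpleGraph V) : TrimV G → V
  | Sum.inl x => x.val.val
  | Sum.inr a => a.val.1.val

/-- The map `e⁺` induced by `e`, from decorations of `T(G)` to decorations
of `G′` viewed as decorations of `G`. -/
def ePlus {V : Type*} (G : SimpleGraph V) (X : Set (TrimV G × TrimV G)) :
    Set (V × V) :=
  (fun p => (trimDrop G p.1, trimDrop G p.2)) '' X

def arrowSet {V : Type*} (G : SimpleGraph V) : Set (V × V) :=
  {p | G.Adj p.1 p.2}

theorem Set.InjOn.exists_image_eq_insert_iff {α β : Type*} {f : α → β} {s X X' : Set α}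
    (hf : Set.InjOn f s) (hX : X ⊆ s) (hX' : X' ⊆ s) :
    (∃ q, q ∉ f '' X ∧ f '' X' = insert q (f '' X)) ↔
      ∃ p, p ∉ X ∧ X' = insert p X := by
  constructor
  · rintro ⟨q, hq, hX'q⟩
    obtain ⟨p, hp, rfl⟩ : q ∈ f '' X' := hX'q ▸ Set.mem_insert _ _
    refine ⟨p, fun h => hq (Set.mem_image_of_mem f h), ?_⟩
    rwa [← Set.image_insert_eq, hf.image_eq_image_iff hX' (Set.insert_subset (hX' hp) hX)]
      at hX'q
  · rintro ⟨p, hp, rfl⟩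
    refine ⟨f p, ?_, Set.image_insert_eq⟩
    rwa [hf.mem_image_iff hX (hX' (Set.mem_insert p X))]

section Decorations

variable {V W : Type*} {G : SimpleGraph V} {X : Set (V × V)}

theorem IsDecoration.subset_arrowSet (hX : IsDecoration G X) : X ⊆ arrowSet G := hX.1

theorem isDormant_iff :
    IsDormant G X ↔ IsDecoration G X ∧ ∀ v, ¬ IsSink G X v ∧ ¬ IsSource G X v :=
  ⟨fun h => ⟨h.1.1, h.2⟩, fun h => ⟨⟨h.1, fun v _ => h.2 v⟩, h.2⟩⟩

theorem not_isLeaf_fst_of_mem {p : V × V} (hp : p ∈ X) (hadj : G.Adj p.1 p.2)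
    (hsrc : ¬ IsSource G X p.1) : ¬ IsLeaf G p.1 := by
  rintro ⟨w, -, huniq⟩
  refine hsrc fun w' hw' => ?_
  rwa [huniq w' hw', ← huniq p.2 hadj]

theorem not_isLeaf_snd_of_mem {p : V × V} (hp : p ∈ X) (hadj : G.Adj p.1 p.2)
    (hsink : ¬ IsSink G X p.2) : ¬ IsLeaf G p.2 := by
  rintro ⟨w, -, huniq⟩
  refine hsink fun w' hw' => ?_
  rwa [huniq w' hw'.symm, ← huniq p.1 hadj.symm]

theorem IsDormant.not_isLeaf_of_mem (hX : IsDormant G X) {p : V × V} (hp : p ∈ X) :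
    ¬ IsLeaf G p.1 ∧ ¬ IsLeaf G p.2 :=
  ⟨not_isLeaf_fst_of_mem hp (hX.1.1.1 p hp) (hX.2 _).2,
    not_isLeaf_snd_of_mem hp (hX.1.1.1 p hp) (hX.2 _).1⟩

theorem not_isSink_and_not_isSource_of_adj {S : Set V}
    (hXS : ∀ p ∈ X, p.1 ∈ S ∧ p.2 ∈ S) {u v : V} (huv : G.Adj u v)
    (hS : u ∉ S ∨ v ∉ S) :
    ¬ IsSink G X v ∧ ¬ IsSource G X v :=
  ⟨fun h => by have := hXS _ (h u huv); tauto,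
    fun h => by have := hXS _ (h u huv.symm); tauto⟩

theorem IsDecoration.preimage {H : SimpleGraph W} (f : V → W) {Z : Set (W × W)}
    (hZ : IsDecoration H Z) : IsDecoration G (Prod.map f f ⁻¹' Z ∩ arrowSet G) :=
  ⟨fun _ hp => hp.2, fun _ hp hswap => hZ.2 _ hp.1 hswap.1⟩

end Decorations

section Homomorphisms

variable {V W : Type*} {H : SimpleGraph V} {G : SimpleGraph W} (f : H →g G)
  {X : Set (V × V)}

theorem IsDecoration.image (hf : Set.InjOn (Prod.map f f) (arrowSet H))
    (hX : IsDecoration H X) : IsDecoration G (Prod.map f f '' X) := by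
  refine ⟨?_, ?_⟩
  · rintro _ ⟨p, hp, rfl⟩
    exact f.map_rel (hX.1 p hp)
  · rintro _ ⟨p, hp, rfl⟩ ⟨q, hq, hqp⟩
    have hswap : Prod.map f f q = Prod.map f f p.swap := hqp
    exact hX.2 p hp (hf (hX.1 q hq) (hX.1 p hp).symm hswap ▸ hq)

variable {f}

theorem IsLeaf.map {v : V} (hsurj : Set.SurjOn f (H.neighborSet v) (G.neighborSet (f v)))
    (hv : IsLeaf H v) : IsLeaf G (f v) := by
  obtain ⟨u, hu, huniq⟩ := hv
  refine ⟨f u, f.map_rel hu, fun w hw => ?_⟩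
  obtain ⟨u', hu', rfl⟩ := hsurj hw
  rw [huniq u' hu']

variable (hf : Set.InjOn (Prod.map f f) (arrowSet H)) (hX : X ⊆ arrowSet H) {v : V}
  (hsurj : Set.SurjOn f (H.neighborSet v) (G.neighborSet (f v)))
include hf hX hsurj

theorem isSink_image_iff : IsSink G (Prod.map f f '' X) (f v) ↔ IsSink H X v := by
  refine ⟨fun h u hu => ?_, fun h w hw => ?_⟩
  · obtain ⟨p, hp, hpu⟩ := h (f u) (f.map_rel hu)
    rwa [← hf (hX hp) (show (u, v) ∈ arrowSet H from hu) hpu]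
  · obtain ⟨u, hu, rfl⟩ := hsurj hw.symm
    exact ⟨(u, v), h u hu.symm, rfl⟩

theorem isSource_image_iff : IsSource G (Prod.map f f '' X) (f v) ↔ IsSource H X v := by
  refine ⟨fun h u hu => ?_, fun h w hw => ?_⟩
  · obtain ⟨p, hp, hpu⟩ := h (f u) (f.map_rel hu)
    rwa [← hf (hX hp) (show (v, u) ∈ arrowSet H from hu) hpu]
  · obtain ⟨u, hu, rfl⟩ := hsurj hw
    exact ⟨(v, u), h u hu, rfl⟩

end Homomorphisms

namespace Ramification

variable {U : Type*} {Γ : SimpleGraph U} {K : Set U}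

def drop : RamV Γ K → U
  | Sum.inl x => x
  | Sum.inr a => a.1.1

variable {x y : {v : U // v ∉ K}} {a b : {p : U × U // p.1 ∈ K ∧ Γ.Adj p.1 p.2}}

theorem adj_inl_inl : (Ramification Γ K).Adj (Sum.inl x) (Sum.inl y) ↔ Γ.Adj x y := by
  simpa [Ramification, Γ.adj_comm] using
    fun (h : Γ.Adj x y) (e : x = y) => h.ne (congrArg Subtype.val e)

theorem adj_inr_inl : (Ramification Γ K).Adj (Sum.inr a) (Sum.inl x) ↔ a.1.2 = x := by
  simp [Ramification, SimpleGraph.fromRel_adj]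

theorem adj_inr_inr :
    (Ramification Γ K).Adj (Sum.inr a) (Sum.inr b) ↔ a.1.2 = b.1.1 ∧ b.1.2 = a.1.1 := by
  simp only [Ramification, SimpleGraph.fromRel_adj, ne_eq, Sum.inr.injEq]
  constructor
  · rintro ⟨-, ⟨h1, h2, -⟩ | ⟨h2, h1, -⟩⟩ <;> exact ⟨h1, h2⟩
  · rintro ⟨h1, h2⟩
    refine ⟨fun hab => ?_, Or.inl ⟨h1, h2, h1 ▸ b.2.1⟩⟩
    subst hab
    exact a.2.2.ne h2.symm

variable {v w : RamV Γ K}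

theorem adj_drop (h : (Ramification Γ K).Adj v w) : Γ.Adj (drop v) (drop w) := by
  have key : ∀ {a x}, (Ramification Γ K).Adj (Sum.inr a) (Sum.inl x) →
      Γ.Adj (drop (Sum.inr a : RamV Γ K)) (drop (Sum.inl x : RamV Γ K)) := by
    intro a x h
    rw [drop, drop, ← adj_inr_inl.1 h]
    exact a.2.2
  rcases v with x | a <;> rcases w with y | b
  · exact adj_inl_inl.1 h
  · exact (key h.symm).symm
  · exact key h
  · rw [drop, drop, ← (adj_inr_inr.1 h).1]
    exact a.2.2

def dropHom : Ramification Γ K →g Γ where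
  toFun := drop
  map_rel' := adj_drop

theorem drop_of_adj_inr (h : (Ramification Γ K).Adj (Sum.inr a) w) : drop w = a.1.2 := by
  rcases w with y | b
  · exact (adj_inr_inl.1 h).symm
  · exact (adj_inr_inr.1 h).1.symm

theorem eq_of_adj_of_drop_eq {v' w' : RamV Γ K} (h : (Ramification Γ K).Adj v w)
    (h' : (Ramification Γ K).Adj v' w') (hv : drop v = drop v') (hw : drop w = drop w') :
    v = v' := by
  rcases v with x | a <;> rcases v' with x' | a'
  · exact congrArg Sum.inl (Subtype.ext hv)
  · exact absurd (show (x : U) ∈ K by rw [show (x : U) = a'.1.1 from hv]; exact a'.2.1) x.2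
  · exact absurd (show (x' : U) ∈ K by rw [← show a.1.1 = (x' : U) from hv]; exact a.2.1) x'.2
  · have h2 : a.1.2 = a'.1.2 := by rw [← drop_of_adj_inr h, ← drop_of_adj_inr h', hw]
    exact congrArg Sum.inr (Subtype.ext (Prod.ext hv h2))

theorem injOn_arrowSet : Set.InjOn (Prod.map dropHom dropHom) (arrowSet (Ramification Γ K)) :=
  fun _ hp _ hq h => Prod.ext
    (eq_of_adj_of_drop_eq hp hq (congrArg Prod.fst h) (congrArg Prod.snd h))
    (eq_of_adj_of_drop_eq (SimpleGraph.Adj.symm hp) (SimpleGraph.Adj.symm hq)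
      (congrArg Prod.snd h) (congrArg Prod.fst h))

/-- The vertex of `R_K(Γ)` lying over `x` on the edge towards `y`: `x` itself if `x ∉ K`,
and `x_y` otherwise. -/
noncomputable def lift (x y : U) (h : Γ.Adj x y) : RamV Γ K :=
  haveI := Classical.dec (x ∈ K)
  if hx : x ∈ K then Sum.inr ⟨(x, y), hx, h⟩ else Sum.inl ⟨x, hx⟩

theorem drop_lift {x y : U} (h : Γ.Adj x y) : drop (lift (K := K) x y h) = x := by
  unfold lift
  split_ifs <;> rfl

theorem adj_lift {x y : U} (h : Γ.Adj x y) :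
    (Ramification Γ K).Adj (lift x y h) (lift y x h.symm) := by
  unfold lift
  split_ifs
  · exact adj_inr_inr.2 ⟨rfl, rfl⟩
  · exact adj_inr_inl.2 rfl
  · exact (adj_inr_inl.2 rfl).symm
  · exact adj_inl_inl.2 h

theorem isLeaf_inr : IsLeaf (Ramification Γ K) (Sum.inr a) := by
  have hlift : lift a.1.1 a.1.2 a.2.2 = (Sum.inr a : RamV Γ K) := dif_pos a.2.1
  have hadj := adj_lift (K := K) a.2.2
  rw [hlift] at hadj
  refine ⟨_, hadj, fun w hw => eq_of_adj_of_drop_eq hw.symm hadj.symm ?_ rfl⟩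
  rw [drop_of_adj_inr hw, drop_lift]

theorem surjOn_neighborSet_inl :
    Set.SurjOn dropHom ((Ramification Γ K).neighborSet (Sum.inl x)) (Γ.neighborSet x) := by
  intro y hy
  have hlift : lift (x : U) y hy = (Sum.inl x : RamV Γ K) := dif_neg x.2
  have hadj := adj_lift (K := K) hy
  rw [hlift] at hadj
  exact ⟨_, hadj, drop_lift hy.symm⟩

end Ramification

section Trimming

variable {V : Type*} {G : SimpleGraph V}

theorem trimDrop_eq_val_drop (u : TrimV G) : trimDrop G u = (Ramification.drop u).1 := by
  cases u <;> rfl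

variable (G) in
def trimHom : Trimming G →g G where
  toFun := trimDrop G
  map_rel' {u w} h := by
    rw [trimDrop_eq_val_drop, trimDrop_eq_val_drop]
    exact Ramification.adj_drop h

theorem not_isLeaf_trimHom (u : TrimV G) : ¬ IsLeaf G (trimHom G u) := by
  rw [trimHom, RelHom.coeFn_mk, trimDrop_eq_val_drop]
  exact (Ramification.drop u).2

theorem injOn_arrowSet_trimHom :
    Set.InjOn (Prod.map (trimHom G) (trimHom G)) (arrowSet (Trimming G)) := by
  intro p hp q hq h
  refine Ramification.injOn_arrowSet hp hq ?_
  obtain ⟨h₁, h₂⟩ := Prod.ext_iff.1 h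
  simp only [Prod.map_fst, Prod.map_snd, trimHom, RelHom.coeFn_mk, trimDrop_eq_val_drop,
    Subtype.val_inj] at h₁ h₂
  exact Prod.ext h₁ h₂

theorem surjOn_neighborSet_trimHom_inl (x : {v // v ∉ trimK G}) :
    Set.SurjOn (trimHom G) ((Trimming G).neighborSet (Sum.inl x)) (G.neighborSet x.1.1) := by
  intro w hw
  have hw' : ¬ IsLeaf G w := fun hl => x.2 ⟨w, hl, hw⟩
  obtain ⟨u, hu, hdu⟩ := Ramification.surjOn_neighborSet_inl
    (show ⟨w, hw'⟩ ∈ (Gprime G).neighborSet x.1 from hw)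
  refine ⟨u, hu, ?_⟩
  rw [trimHom, RelHom.coeFn_mk, trimDrop_eq_val_drop]
  exact congrArg Subtype.val hdu

theorem mem_image_arrowSet_trimming {p : V × V} (hp : G.Adj p.1 p.2) (h₁ : ¬ IsLeaf G p.1)
    (h₂ : ¬ IsLeaf G p.2) : p ∈ Prod.map (trimHom G) (trimHom G) '' arrowSet (Trimming G) := by
  have hadj : (Gprime G).Adj ⟨p.1, h₁⟩ ⟨p.2, h₂⟩ := hp
  refine ⟨(Ramification.lift _ _ hadj, Ramification.lift _ _ hadj.symm),
    Ramification.adj_lift hadj, ?_⟩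
  simp [trimHom, trimDrop_eq_val_drop, Ramification.drop_lift]

theorem isDormant_ePlus {X : Set (TrimV G × TrimV G)} (hX : IsState (Trimming G) X) :
    IsDormant G (ePlus G X) := by
  have hint : ∀ p ∈ ePlus G X, p.1 ∈ {v | ¬ IsLeaf G v} ∧ p.2 ∈ {v | ¬ IsLeaf G v} := by
    rintro _ ⟨q, -, rfl⟩
    exact ⟨not_isLeaf_trimHom q.1, not_isLeaf_trimHom q.2⟩
  refine isDormant_iff.2 ⟨hX.1.image (trimHom G) injOn_arrowSet_trimHom, fun v => ?_⟩
  by_cases hv : IsLeaf G v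
  · obtain ⟨w, hw⟩ := hv.exists
    exact not_isSink_and_not_isSource_of_adj hint hw.symm (Or.inr (not_not.2 hv))
  by_cases hK : ⟨v, hv⟩ ∈ trimK G
  · obtain ⟨l, hl, hvl⟩ := hK
    exact not_isSink_and_not_isSource_of_adj hint hvl.symm (Or.inl (not_not.2 hl))
  have hsurj := surjOn_neighborSet_trimHom_inl ⟨⟨v, hv⟩, hK⟩
  have hx := hX.2 _ fun h => hv (h.map hsurj)
  exact ⟨(isSink_image_iff injOn_arrowSet_trimHom hX.1.subset_arrowSet hsurj).not.2 hx.1,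
    (isSource_image_iff injOn_arrowSet_trimHom hX.1.subset_arrowSet hsurj).not.2 hx.2⟩

theorem exists_isState_ePlus_eq {Z : Set (V × V)} (hZ : IsDormant G Z) :
    ∃ X, IsState (Trimming G) X ∧ ePlus G X = Z := by
  set f := Prod.map (trimHom G) (trimHom G)
  have himage : f '' (f ⁻¹' Z ∩ arrowSet (Trimming G)) = Z := by
    rw [Set.image_preimage_inter, Set.inter_eq_left]
    intro p hp
    exact mem_image_arrowSet_trimming (hZ.1.1.1 p hp) (hZ.not_isLeaf_of_mem hp).1
      (hZ.not_isLeaf_of_mem hp).2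
  have hdec : IsDecoration (Trimming G) (f ⁻¹' Z ∩ arrowSet (Trimming G)) :=
    hZ.1.1.preimage (trimHom G)
  refine ⟨_, ⟨hdec, ?_⟩, himage⟩
  rintro (x | a) hx
  · have hsurj := surjOn_neighborSet_trimHom_inl x
    rw [← isSink_image_iff injOn_arrowSet_trimHom hdec.subset_arrowSet hsurj,
      ← isSource_image_iff injOn_arrowSet_trimHom hdec.subset_arrowSet hsurj, himage]
    exact hZ.2 _
  · exact absurd Ramification.isLeaf_inr hx

theorem follower_iff_dormantFollower {X X' : Set (TrimV G × TrimV G)}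
    (hX : IsState (Trimming G) X) (hX' : IsState (Trimming G) X') :
    Follower (Trimming G) X X' ↔ DormantFollower G (ePlus G X) (ePlus G X') := by
  have hinsert := injOn_arrowSet_trimHom.exists_image_eq_insert_iff
    hX.1.subset_arrowSet hX'.1.subset_arrowSet
  exact ⟨fun h => ⟨isDormant_ePlus hX, isDormant_ePlus hX', hinsert.2 h.2.2⟩,
    fun h => ⟨hX, hX', hinsert.1 h.2.2⟩⟩

end Trimming

theorem trimming_game_equiv_general {V : Type*} (G : SimpleGraph V) :
    Set.BijOn (ePlus G) {X | IsState (Trimming G) X} {Y | IsDormant G Y} ∧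
    (∀ X X' : Set (TrimV G × TrimV G), IsState (Trimming G) X →
      IsState (Trimming G) X' → (X ⊆ X' ↔ ePlus G X ⊆ ePlus G X')) ∧
    (∀ X X' : Set (TrimV G × TrimV G), IsState (Trimming G) X →
      IsState (Trimming G) X' →
      (Follower (Trimming G) X X' ↔ DormantFollower G (ePlus G X) (ePlus G X'))) := by
  have hinj := injOn_arrowSet_trimHom (G := G)
  refine ⟨⟨fun X hX => isDormant_ePlus hX, fun X hX X' hX' h => ?_,
    fun Z hZ => exists_isState_ePlus_eq hZ⟩, fun X X' hX hX' => ?_,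
    fun X X' hX hX' => follower_iff_dormantFollower hX hX'⟩
  · exact (hinj.image_eq_image_iff hX.1.subset_arrowSet hX'.1.subset_arrowSet).1 h
  · exact (hinj.image_subset_image_iff hX.1.subset_arrowSet hX'.1.subset_arrowSet).symm

/-- The Game of Arrows on a graph `G` (without isolated vertices) is equivalent to
the Trimmed Game of Arrows on the trimming `T(G)`: the map `e⁺` restricts to a
bijection from the states of `T(G)` to the dormant states of `G`, and this bijection
respects inclusion of states and the follower relation, so the corresponding game
trees are isomorphic. -/
theorem trimming_game_equiv {V : Type*} [Fintype V] (G : SimpleGraph V)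
    (hiso : ∀ v, ∃ w, G.Adj v w) :
    Set.BijOn (ePlus G) {X | IsState (Trimming G) X} {Y | IsDormant G Y} ∧
    (∀ X X' : Set (TrimV G × TrimV G), IsState (Trimming G) X →
      IsState (Trimming G) X' → (X ⊆ X' ↔ ePlus G X ⊆ ePlus G X')) ∧
    (∀ X X' : Set (TrimV G × TrimV G), IsState (Trimming G) X →
      IsState (Trimming G) X' →
      (Follower (Trimming G) X X' ↔ DormantFollower G (ePlus G X) (ePlus G X'))) :=
  trimming_game_equiv_general G
end

section
/- (Local Criterion for State Isomorphism) Let X and Y be states of graphs G and H respectively, and let a be a bijection from the arrows of U(X) to the arrows of U(Y) that commutes with the flip operation. Then a is a state isomorphism from X to Y if and only if a⁺ is locally state-preventing at every vertex of U(X) and (a⁺)⁻¹ is locally state-preventing at every vertex of U(Y). -/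
/-- The tail-flower of `X` at `v`: `X` together with all arrows out of `v` along
unmarked edges of `U(X)`. -/
def tailFlower {V : Type*} (G : SimpleGraph V) (X : Set (V × V)) (v : V) :
    Set (V × V) :=
  X ∪ {q | ∃ w, q = (v, w) ∧ UnmarkedArrow G X (v, w)}

/-- The head-flower of `X` at `v`: `X` together with all arrows into `v` along
unmarked edges of `U(X)`. -/
def headFlower {V : Type*} (G : SimpleGraph V) (X : Set (V × V)) (v : V) :
    Set (V × V) :=
  X ∪ {q | ∃ w, q = (w, v) ∧ UnmarkedArrow G X (v, w)}

/-- The inverse `(a⁺)⁻¹` of the map `a⁺`, on decorations containing `Y`: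
`(a⁺)⁻¹(Y*) = X ∪ a⁻¹(Y* \ Y)`. -/
def aInv {V W : Type*} (G : SimpleGraph V) (a : V × V → W × W)
    (X : Set (V × V)) (Y : Set (W × W)) (Y' : Set (W × W)) : Set (V × V) :=
  X ∪ {p | UnmarkedArrow G X p ∧ a p ∈ Y' \ Y}

/-- `a⁺` is locally state-preventing at the vertex `x` of `U(X)`: whenever a flower
of `X` at `x` is not a state, its image under `a⁺` is also not a state. -/
def LocallyStatePreventing {V W : Type*} (G : SimpleGraph V) (H : SimpleGraph W)
    (X : Set (V × V)) (Y : Set (W × W)) (a : V × V → W × W) (x : V) : Prop :=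
  (¬ IsState G (tailFlower G X x) → ¬ IsState H (aPlus a X Y (tailFlower G X x))) ∧
  (¬ IsState G (headFlower G X x) → ¬ IsState H (aPlus a X Y (headFlower G X x)))

/-- `(a⁺)⁻¹` is locally state-preventing at the vertex `y` of `U(Y)`: whenever a
flower of `Y` at `y` is not a state, its image under `(a⁺)⁻¹` is also not a state. -/
def LocallyStatePreventingInv {V W : Type*} (G : SimpleGraph V) (H : SimpleGraph W)
    (X : Set (V × V)) (Y : Set (W × W)) (a : V × V → W × W) (y : W) : Prop :=
  (¬ IsState H (tailFlower H Y y) → ¬ IsState G (aInv G a X Y (tailFlower H Y y))) ∧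
  (¬ IsState H (headFlower H Y y) → ¬ IsState G (aInv G a X Y (headFlower H Y y)))


section Helpers

variable {V W : Type*}

lemma unmarked_swap {G : SimpleGraph V} {X : Set (V × V)} {p : V × V}
    (h : UnmarkedArrow G X p) : UnmarkedArrow G X (Prod.swap p) :=
  ⟨h.1.symm, h.2.2, by simpa using h.2.1⟩

lemma isState_subset {G : SimpleGraph V} {X' S : Set (V × V)} (h : IsState G X')
    (hS : S ⊆ X') : IsState G S := by
  refine ⟨⟨fun p hp => h.1.1 p (hS hp), fun p hp hsw => h.1.2 p (hS hp) (hS hsw)⟩, ?_⟩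
  intro v hv
  obtain ⟨h1, h2⟩ := h.2 v hv
  exact ⟨fun hs => h1 fun u hu => hS (hs u hu), fun hs => h2 fun u hu => hS (hs u hu)⟩

lemma descendent_ssubset {G : SimpleGraph V} {X X' : Set (V × V)}
    (h : Descendent G X X') : IsState G X' ∧ X ⊂ X' := by
  induction h with
  | single h =>
    obtain ⟨p, hp, rfl⟩ := h.2.2
    exact ⟨h.2.1, Set.ssubset_insert hp⟩
  | tail _ h ih =>
    obtain ⟨p, hp, rfl⟩ := h.2.2
    exact ⟨h.2.1, ih.2.trans (Set.ssubset_insert hp)⟩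

lemma descendent_of_aux {G : SimpleGraph V} [Finite V] {X : Set (V × V)}
    (hX : IsState G X) :
    ∀ n (X' : Set (V × V)), IsState G X' → X ⊆ X' → (X' \ X).ncard = n + 1 →
      Descendent G X X' := by
  intro n
  induction n with
  | zero =>
    intro X' h1 h2 h3
    obtain ⟨p, hp⟩ := Set.ncard_eq_one.mp h3
    have hpX : p ∈ X' \ X := hp ▸ rfl
    have hX'eq : X' = insert p X := by
      ext q
      constructor
      · intro hq
        by_cases hqX : q ∈ X
        · exact Set.mem_insert_of_mem _ hqX
        · have : q ∈ X' \ X := ⟨hq, hqX⟩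
          rw [hp] at this
          exact this ▸ Set.mem_insert _ _
      · rintro (rfl | hq)
        · exact hpX.1
        · exact h2 hq
    exact Relation.TransGen.single ⟨hX, hX'eq ▸ h1, p, hpX.2, hX'eq⟩
  | succ n ih =>
    intro X' h1 h2 h3
    have hne : (X' \ X).Nonempty := by
      rw [← Set.ncard_pos (Set.toFinite _), h3]; omega
    obtain ⟨p, hp⟩ := hne
    set S := X' \ {p} with hSdef
    have hSsub : S ⊆ X' := Set.diff_subset
    have hSstate : IsState G S := isState_subset h1 hSsub
    have hXS : X ⊆ S := fun q hq => ⟨h2 hq, by rintro rfl; exact hp.2 hq⟩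
    have hdiff : S \ X = (X' \ X) \ {p} := by
      ext q; simp only [hSdef, Set.mem_diff, Set.mem_singleton_iff]; tauto
    have hcard : (S \ X).ncard = n + 1 := by
      rw [hdiff]
      have := Set.ncard_diff_singleton_add_one hp (Set.toFinite _)
      omega
    have hdesc := ih S hSstate hXS hcard
    refine hdesc.tail ⟨hSstate, h1, p, ?_, ?_⟩
    · simp [hSdef]
    · rw [hSdef, Set.insert_diff_singleton, Set.insert_eq_self.mpr hp.1]

lemma descendent_iff {G : SimpleGraph V} [Finite V] {X X' : Set (V × V)}
    (hX : IsState G X) :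
    Descendent G X X' ↔ IsState G X' ∧ X ⊆ X' ∧ X ≠ X' := by
  constructor
  · intro h
    obtain ⟨h1, h2⟩ := descendent_ssubset h
    exact ⟨h1, h2.subset, h2.ne⟩
  · rintro ⟨h1, h2, h3⟩
    have hne : (X' \ X).Nonempty := by
      obtain ⟨q, hq1, hq2⟩ := Set.exists_of_ssubset (h2.ssubset_of_ne h3)
      exact ⟨q, hq1, hq2⟩
    have hpos : 0 < (X' \ X).ncard := (Set.ncard_pos (Set.toFinite _)).mpr hne
    exact descendent_of_aux hX ((X' \ X).ncard - 1) X' h1 h2 (by omega)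

lemma extras_unmarked {G : SimpleGraph V} {X X' : Set (V × V)}
    (hd : IsDecoration G X') (hsub : X ⊆ X') {p : V × V} (hp : p ∈ X' \ X) :
    UnmarkedArrow G X p :=
  ⟨hd.1 p hp.1, hp.2, fun hs => hd.2 p hp.1 (hsub hs)⟩

end Helpers

section Core

variable {V W : Type*} {G : SimpleGraph V} {H : SimpleGraph W}
  {X : Set (V × V)} {Y : Set (W × W)} {a : V × V → W × W}

/-- The image `aPlus` of a decoration with unmarked extras, computed. -/
lemma aPlus_aInv
    (hbij : Set.BijOn a {p | UnmarkedArrow G X p} {q | UnmarkedArrow H Y q})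
    {Y' : Set (W × W)} (hsub : Y ⊆ Y')
    (hunm : ∀ q ∈ Y' \ Y, UnmarkedArrow H Y q) :
    aPlus a X Y (aInv G a X Y Y') = Y' := by
  have hS : ((X ∪ {p | UnmarkedArrow G X p ∧ a p ∈ Y' \ Y}) \ X)
      = {p | UnmarkedArrow G X p ∧ a p ∈ Y' \ Y} := by
    ext p
    simp only [Set.mem_diff, Set.mem_union, Set.mem_setOf_eq]
    exact ⟨fun h => h.1.resolve_left h.2, fun h => ⟨Or.inr h, h.1.2.1⟩⟩
  have himg : a '' {p | UnmarkedArrow G X p ∧ a p ∈ Y' \ Y} = Y' \ Y := by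
    apply Set.Subset.antisymm
    · rintro q ⟨p, hp, rfl⟩; exact hp.2
    · intro q hq
      obtain ⟨p, hp, rfl⟩ := hbij.surjOn (hunm q hq)
      exact ⟨p, ⟨hp, hq⟩, rfl⟩
  rw [aPlus, aInv, hS, himg, Set.union_diff_cancel hsub]

lemma aInv_aPlus
    (hbij : Set.BijOn a {p | UnmarkedArrow G X p} {q | UnmarkedArrow H Y q})
    {X' : Set (V × V)} (hsub : X ⊆ X')
    (hunm : ∀ p ∈ X' \ X, UnmarkedArrow G X p) :
    aInv G a X Y (aPlus a X Y X') = X' := by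
  have himg : ∀ q ∈ a '' (X' \ X), UnmarkedArrow H Y q := by
    rintro q ⟨p, hp, rfl⟩; exact hbij.mapsTo (hunm p hp)
  have hdiff : (Y ∪ a '' (X' \ X)) \ Y = a '' (X' \ X) := by
    ext q
    simp only [Set.mem_diff, Set.mem_union]
    exact ⟨fun h => h.1.resolve_left h.2, fun h => ⟨Or.inr h, (himg q h).2.1⟩⟩
  have hset : {p | UnmarkedArrow G X p ∧ a p ∈ a '' (X' \ X)} = X' \ X := by
    ext p
    simp only [Set.mem_setOf_eq]
    constructor
    · rintro ⟨hp, p', hp', heq⟩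
      exact hbij.injOn (hunm p' hp') hp heq ▸ hp'
    · intro hp
      exact ⟨hunm p hp, p, hp, rfl⟩
  rw [aPlus, aInv, hdiff, hset, Set.union_diff_cancel hsub]


/-- Key step: under the local state-preventing condition for `(a⁺)⁻¹`, the map
`a⁺` sends states containing `X` to states. -/
lemma aPlus_isState (hX : IsState G X) (hY : IsState H Y)
    (hbij : Set.BijOn a {p | UnmarkedArrow G X p} {q | UnmarkedArrow H Y q})
    (hflip : ∀ p, UnmarkedArrow G X p → a (Prod.swap p) = Prod.swap (a p))
    (hlsp : ∀ y, UnmarkedVert H Y y → LocallyStatePreventingInv G H X Y a y)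
    {X' : Set (V × V)} (hX' : IsState G X') (hsub : X ⊆ X') :
    IsState H (aPlus a X Y X') := by
  set A := a '' (X' \ X) with hAdef
  have hunm : ∀ p ∈ X' \ X, UnmarkedArrow G X p := fun p hp =>
    extras_unmarked hX'.1 hsub hp
  have hA : ∀ q ∈ A, UnmarkedArrow H Y q := by
    rintro q ⟨p, hp, rfl⟩; exact hbij.mapsTo (hunm p hp)
  have hAset : aPlus a X Y X' = Y ∪ A := rfl
  rw [hAset]
  constructor
  · -- decoration
    constructor
    · rintro q (hq | hq)
      · exact hY.1.1 q hq
      · exact (hA q hq).1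
    · rintro q (hq | hq) (hs | hs)
      · exact hY.1.2 q hq hs
      · exact (hA _ hs).2.2 (by simpa using hq)
      · exact (hA q hq).2.2 hs
      · -- both q and swap q in A
        obtain ⟨p, hp, rfl⟩ := hq
        obtain ⟨p', hp', heq⟩ := hs
        have hpu := hunm p hp
        have hswu : UnmarkedArrow G X (Prod.swap p) := unmarked_swap hpu
        have : a (Prod.swap p) = a p' := by rw [hflip p hpu, heq]
        have := hbij.injOn (hunm p' hp') hswu this.symm
        rw [this] at hp'
        exact hX'.1.2 p hp.1 hp'.1
  · -- no sinks or sources at internal vertices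
    intro w hw
    constructor
    · -- no sink at w
      intro hsink
      obtain ⟨v0, hadj0, h0⟩ := by
        have := (hY.2 w hw).1
        unfold IsSink at this
        push_neg at this
        exact this
      have hq0 : (v0, w) ∈ A := (hsink v0 hadj0).resolve_left h0
      have hq0u := hA _ hq0
      have hvert : UnmarkedVert H Y w := ⟨v0, unmarked_swap hq0u⟩
      have hFsink : IsSink H (headFlower H Y w) w := by
        intro v hadj
        rcases hsink v hadj with h | h
        · exact Or.inl h
        · exact Or.inr ⟨v, rfl, unmarked_swap (hA _ h)⟩
      have hnF : ¬ IsState H (headFlower H Y w) := fun hst => (hst.2 w hw).1 hFsink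
      have hnInv := (hlsp w hvert).2 hnF
      apply hnInv
      apply isState_subset hX'
      rintro p (hp | hp)
      · exact hsub hp
      · obtain ⟨hpu, hpF⟩ := hp
        have hpA : a p ∈ A := by
          rcases hpF.1 with h | ⟨v, heq2, hv⟩
          · exact absurd h hpF.2
          · rw [heq2]
            exact (hsink v hv.1.symm).resolve_left (unmarked_swap hv).2.1
        obtain ⟨p', hp', heq⟩ := hpA
        rw [hbij.injOn hpu (hunm p' hp') heq.symm]
        exact hp'.1
    · -- no source at w
      intro hsource
      obtain ⟨v0, hadj0, h0⟩ := by
        have := (hY.2 w hw).2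
        unfold IsSource at this
        push_neg at this
        exact this
      have hq0 : (w, v0) ∈ A := (hsource v0 hadj0).resolve_left h0
      have hq0u := hA _ hq0
      have hvert : UnmarkedVert H Y w := ⟨v0, hq0u⟩
      have hFsrc : IsSource H (tailFlower H Y w) w := by
        intro v hadj
        rcases hsource v hadj with h | h
        · exact Or.inl h
        · exact Or.inr ⟨v, rfl, hA _ h⟩
      have hnF : ¬ IsState H (tailFlower H Y w) := fun hst => (hst.2 w hw).2 hFsrc
      have hnInv := (hlsp w hvert).1 hnF
      apply hnInv
      apply isState_subset hX'
      rintro p (hp | hp)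
      · exact hsub hp
      · obtain ⟨hpu, hpF⟩ := hp
        have hpA : a p ∈ A := by
          rcases hpF.1 with h | ⟨v, heq2, hv⟩
          · exact absurd h hpF.2
          · rw [heq2]
            exact (hsource v hv.1).resolve_left hv.2.1
        obtain ⟨p', hp', heq⟩ := hpA
        rw [hbij.injOn hpu (hunm p' hp') heq.symm]
        exact hp'.1

/-- Mirror of `aPlus_isState`: under the local state-preventing condition for `a⁺`,
the map `(a⁺)⁻¹` sends states containing `Y` to states. -/
lemma aInv_isState (hX : IsState G X) (hY : IsState H Y)
    (hbij : Set.BijOn a {p | UnmarkedArrow G X p} {q | UnmarkedArrow H Y q})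
    (hflip : ∀ p, UnmarkedArrow G X p → a (Prod.swap p) = Prod.swap (a p))
    (hlsp : ∀ x, UnmarkedVert G X x → LocallyStatePreventing G H X Y a x)
    {Y' : Set (W × W)} (hY' : IsState H Y') (hsub : Y ⊆ Y') :
    IsState G (aInv G a X Y Y') := by
  set S := {p | UnmarkedArrow G X p ∧ a p ∈ Y' \ Y} with hSdef
  have hSu : ∀ p ∈ S, UnmarkedArrow G X p := fun p hp => hp.1
  have hSet : aInv G a X Y Y' = X ∪ S := rfl
  rw [hSet]
  constructor
  · constructor
    · rintro p (hp | hp)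
      · exact hX.1.1 p hp
      · exact hp.1.1
    · rintro p (hp | hp) (hs | hs)
      · exact hX.1.2 p hp hs
      · exact (hSu _ hs).2.2 (by simpa using hp)
      · exact hp.1.2.2 hs
      · have h1 : a p ∈ Y' := hp.2.1
        have h2 : a (Prod.swap p) ∈ Y' := hs.2.1
        rw [hflip p hp.1] at h2
        exact hY'.1.2 (a p) h1 h2
  · intro v hv
    constructor
    · intro hsink
      obtain ⟨u0, hadj0, h0⟩ := by
        have := (hX.2 v hv).1
        unfold IsSink at this
        push_neg at this
        exact this
      have hq0 : (u0, v) ∈ S := (hsink u0 hadj0).resolve_left h0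
      have hvert : UnmarkedVert G X v := ⟨u0, unmarked_swap hq0.1⟩
      have hFsink : IsSink G (headFlower G X v) v := by
        intro u hadj
        rcases hsink u hadj with h | h
        · exact Or.inl h
        · exact Or.inr ⟨u, rfl, unmarked_swap h.1⟩
      have hnF : ¬ IsState G (headFlower G X v) := fun hst => (hst.2 v hv).1 hFsink
      have hnIm := (hlsp v hvert).2 hnF
      apply hnIm
      apply isState_subset hY'
      rintro q (hq | hq)
      · exact hsub hq
      · obtain ⟨p, hp, rfl⟩ := hq
        have hpS : p ∈ S := by
          rcases hp.1 with h | ⟨u, rfl, hu⟩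
          · exact absurd h hp.2
          · exact (hsink u hu.1.symm).resolve_left (unmarked_swap hu).2.1
        exact hpS.2.1
    · intro hsource
      obtain ⟨u0, hadj0, h0⟩ := by
        have := (hX.2 v hv).2
        unfold IsSource at this
        push_neg at this
        exact this
      have hq0 : (v, u0) ∈ S := (hsource u0 hadj0).resolve_left h0
      have hvert : UnmarkedVert G X v := ⟨u0, hq0.1⟩
      have hFsrc : IsSource G (tailFlower G X v) v := by
        intro u hadj
        rcases hsource u hadj with h | h
        · exact Or.inl h
        · exact Or.inr ⟨u, rfl, h.1⟩
      have hnF : ¬ IsState G (tailFlower G X v) := fun hst => (hst.2 v hv).2 hFsrc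
      have hnIm := (hlsp v hvert).1 hnF
      apply hnIm
      apply isState_subset hY'
      rintro q (hq | hq)
      · exact hsub hq
      · obtain ⟨p, hp, rfl⟩ := hq
        have hpS : p ∈ S := by
          rcases hp.1 with h | ⟨u, rfl, hu⟩
          · exact absurd h hp.2
          · exact (hsource u hu.1).resolve_left hu.2.1
        exact hpS.2.1

end Core


section Flowers

variable {V : Type*} {G : SimpleGraph V} {X : Set (V × V)} {x : V}

lemma tailFlower_subset : X ⊆ tailFlower G X x := Set.subset_union_left

lemma headFlower_subset : X ⊆ headFlower G X x := Set.subset_union_left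

lemma tailFlower_extras : ∀ p ∈ tailFlower G X x \ X, UnmarkedArrow G X p := by
  rintro p ⟨(h | ⟨w, rfl, hu⟩), hn⟩
  · exact absurd h hn
  · exact hu

lemma headFlower_extras : ∀ p ∈ headFlower G X x \ X, UnmarkedArrow G X p := by
  rintro p ⟨(h | ⟨w, rfl, hu⟩), hn⟩
  · exact absurd h hn
  · exact unmarked_swap hu

end Flowers

/-- **Local Criterion for State Isomorphism.**  Let `X` and `Y` be states of graphs
`G` and `H`, and let `a` be a flip-commuting bijection from the arrows of `U(X)` to
the arrows of `U(Y)`.  Then `a` is a state isomorphism from `X` to `Y` if and only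
if `a⁺` is locally state-preventing at every vertex of `U(X)` and `(a⁺)⁻¹` is
locally state-preventing at every vertex of `U(Y)`. -/
theorem isStateIso_iff_locallyStatePreventing {V W : Type*} [Fintype V] [Fintype W]
    (G : SimpleGraph V) (H : SimpleGraph W)
    (hG : ∀ v, ∃ w, G.Adj v w) (hH : ∀ v, ∃ w, H.Adj v w)
    (X : Set (V × V)) (Y : Set (W × W)) (hX : IsState G X) (hY : IsState H Y)
    (a : V × V → W × W)
    (hbij : Set.BijOn a {p | UnmarkedArrow G X p} {q | UnmarkedArrow H Y q})
    (hflip : ∀ p, UnmarkedArrow G X p → a (Prod.swap p) = Prod.swap (a p)) :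
    IsStateIso G H X Y a ↔
      ((∀ x, UnmarkedVert G X x → LocallyStatePreventing G H X Y a x) ∧
       (∀ y, UnmarkedVert H Y y → LocallyStatePreventingInv G H X Y a y)) := by
  have hdescG : ∀ X', Descendent G X X' ↔ IsState G X' ∧ X ⊆ X' ∧ X ≠ X' :=
    fun _ => descendent_iff hX
  have hdescH : ∀ Y', Descendent H Y Y' ↔ IsState H Y' ∧ Y ⊆ Y' ∧ Y ≠ Y' :=
    fun _ => descendent_iff hY
  constructor
  · rintro ⟨-, -, hbp⟩
    constructor
    · -- a⁺ is locally state-preventing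
      intro x hx
      obtain ⟨w0, hw0⟩ := hx
      have key : ∀ F : Set (V × V), X ⊆ F → X ≠ F →
          (∀ p ∈ F \ X, UnmarkedArrow G X p) →
          ¬ IsState G F → ¬ IsState H (aPlus a X Y F) := by
        intro F hFsub hFne hFunm hnF hst
        -- the image is a proper state extension of Y, hence a descendent
        obtain ⟨p0, hp0⟩ : (F \ X).Nonempty := by
          obtain ⟨q, hq1, hq2⟩ := Set.exists_of_ssubset (hFsub.ssubset_of_ne hFne)
          exact ⟨q, hq1, hq2⟩
        have hp0u := hFunm p0 hp0
        have ha0 : UnmarkedArrow H Y (a p0) := hbij.mapsTo hp0u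
        have hYne : Y ≠ aPlus a X Y F := by
          intro h
          exact ha0.2.1 (h ▸ (Or.inr ⟨p0, hp0, rfl⟩ : a p0 ∈ aPlus a X Y F))
        have hmem : aPlus a X Y F ∈ {Y' | Descendent H Y Y'} := by
          rw [Set.mem_setOf_eq, hdescH]
          exact ⟨hst, Set.subset_union_left, hYne⟩
        obtain ⟨X'', hX''d, heq⟩ := hbp.2.2 hmem
        rw [Set.mem_setOf_eq, hdescG] at hX''d
        obtain ⟨h1, h2, _⟩ := hX''d
        have hX''unm : ∀ p ∈ X'' \ X, UnmarkedArrow G X p := fun p hp =>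
          extras_unmarked h1.1 h2 hp
        have : X'' = F := by
          have e1 := aInv_aPlus (G := G) (H := H) hbij h2 hX''unm
          have e2 := aInv_aPlus (G := G) (H := H) hbij hFsub hFunm
          rw [← e1, ← e2, heq]
        exact hnF (this ▸ h1)
      constructor
      · exact key _ tailFlower_subset
          (fun h => hw0.2.1 (by rw [h]; exact Or.inr ⟨w0, rfl, hw0⟩))
          tailFlower_extras
      · exact key _ headFlower_subset
          (fun h => hw0.2.2 (by rw [h]; exact Or.inr ⟨w0, rfl, hw0⟩))
          headFlower_extras
    · -- (a⁺)⁻¹ is locally state-preventing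
      intro y hy
      obtain ⟨w0, hw0⟩ := hy
      have key : ∀ F : Set (W × W), Y ⊆ F → (∃ q0 ∈ F \ Y, UnmarkedArrow H Y q0) →
          (∀ q ∈ F \ Y, UnmarkedArrow H Y q) →
          ¬ IsState H F → ¬ IsState G (aInv G a X Y F) := by
        intro F hFsub hq0 hFunm hnF hst
        obtain ⟨q0, hq0F, hq0u⟩ := hq0
        obtain ⟨p0, hp0u, hp0⟩ := hbij.2.2 hq0u
        have hXne : X ≠ aInv G a X Y F := by
          intro h
          exact hp0u.2.1 (h ▸ (Or.inr ⟨hp0u, hp0 ▸ hq0F⟩ : p0 ∈ aInv G a X Y F))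
        have hmem : aInv G a X Y F ∈ {X' | Descendent G X X'} := by
          rw [Set.mem_setOf_eq, hdescG]
          exact ⟨hst, Set.subset_union_left, hXne⟩
        have := hbp.1 hmem
        rw [Set.mem_setOf_eq, hdescH] at this
        have heq := aPlus_aInv (G := G) (H := H) hbij hFsub hFunm
        rw [heq] at this
        exact hnF this.1
      constructor
      · exact key _ tailFlower_subset
          ⟨(y, w0), ⟨Or.inr ⟨w0, rfl, hw0⟩, hw0.2.1⟩, hw0⟩
          tailFlower_extras
      · exact key _ headFlower_subset
          ⟨(w0, y), ⟨Or.inr ⟨w0, rfl, hw0⟩, hw0.2.2⟩, unmarked_swap hw0⟩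
          headFlower_extras
  · rintro ⟨hlsp, hlspInv⟩
    refine ⟨hbij, hflip, ?_, ?_, ?_⟩
    · -- MapsTo
      intro X' hX'
      rw [Set.mem_setOf_eq, hdescG] at hX'
      obtain ⟨h1, h2, h3⟩ := hX'
      rw [Set.mem_setOf_eq, hdescH]
      refine ⟨aPlus_isState hX hY hbij hflip hlspInv h1 h2, Set.subset_union_left, ?_⟩
      obtain ⟨p0, hp01, hp02⟩ := Set.exists_of_ssubset (h2.ssubset_of_ne h3)
      have hp0u : UnmarkedArrow G X p0 := extras_unmarked h1.1 h2 ⟨hp01, hp02⟩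
      intro h
      exact (hbij.mapsTo hp0u).2.1
        (h ▸ (Or.inr ⟨p0, ⟨hp01, hp02⟩, rfl⟩ : a p0 ∈ aPlus a X Y X'))
    · -- InjOn
      intro X1 h1 X2 h2 heq
      rw [Set.mem_setOf_eq, hdescG] at h1 h2
      have e1 := aInv_aPlus (G := G) (H := H) hbij h1.2.1
        (fun p hp => extras_unmarked h1.1.1 h1.2.1 hp)
      have e2 := aInv_aPlus (G := G) (H := H) hbij h2.2.1
        (fun p hp => extras_unmarked h2.1.1 h2.2.1 hp)
      rw [← e1, ← e2, heq]
    · -- SurjOn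
      intro Y' hY'
      rw [Set.mem_setOf_eq, hdescH] at hY'
      obtain ⟨h1, h2, h3⟩ := hY'
      have hunm : ∀ q ∈ Y' \ Y, UnmarkedArrow H Y q := fun q hq =>
        extras_unmarked h1.1 h2 hq
      refine ⟨aInv G a X Y Y', ?_, aPlus_aInv (G := G) (H := H) hbij h2 hunm⟩
      rw [Set.mem_setOf_eq, hdescG]
      refine ⟨aInv_isState hX hY hbij hflip hlsp h1 h2, Set.subset_union_left, ?_⟩
      obtain ⟨q0, hq01, hq02⟩ := Set.exists_of_ssubset (h2.ssubset_of_ne h3)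
      obtain ⟨p0, hp0u, hp0⟩ := hbij.2.2 (hunm q0 ⟨hq01, hq02⟩)
      intro h
      exact hp0u.2.1 (h ▸ (Or.inr ⟨hp0u, hp0 ▸ ⟨hq01, hq02⟩⟩ : p0 ∈ aInv G a X Y Y'))
end

section
/- Let X and Y be states of graphs G and H respectively, and let a_f be the map on arrows induced by a graph isomorphism f : U(X) → U(Y). If f(h(X) ∪ L(G)) = h(Y) ∪ L(H) and f(t(X) ∪ L(G)) = t(Y) ∪ L(H), then a_f is a state isomorphism from X to Y. -/
/-- The set of heads of `X`: vertices into which some arrow of `X` points. -/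
def headSet {V : Type*} (X : Set (V × V)) : Set V :=
  {v | ∃ w, (w, v) ∈ X}

/-- The set of tails of `X`: vertices out of which some arrow of `X` points. -/
def tailSet {V : Type*} (X : Set (V × V)) : Set V :=
  {v | ∃ w, (v, w) ∈ X}

/-- The set of leaves of `G`. -/
def leafSet {V : Type*} (G : SimpleGraph V) : Set V :=
  {v | IsLeaf G v}

/-- The vertex set of the subgraph `U(X)` induced by the unmarked edges. -/
def unmarkedVertSet {V : Type*} (G : SimpleGraph V) (X : Set (V × V)) : Set V :=
  {v | UnmarkedVert G X v}

/-!
States containing `X` only add arrows on unmarked edges, so whether `X ∪ S` is a state is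
decided vertex by vertex on `U(X)`: a non-leaf vertex `u` does not become a sink iff it is
already a tail of `X` or some unmarked arrow into `u` is left out of `S`, and dually for
sources. The isomorphism `f` transports unmarked arrows, and the hypotheses on `h ∪ L` and
`t ∪ L` transport the rest, so `X ∪ S` is a state iff `Y ∪ a_f(S)` is. Hence `a⁺` sends
followers to followers and every follower of an image lifts back, which gives the bijection
on descendents by induction along the chains of followers.
-/

open Set

theorem Set.InjOn.mem_iff_of_image_inter_eq {α β : Type*} {f : α → β} {s A : Set α}
    {t B : Set β} (hf : InjOn f s) (h : f '' (A ∩ s) = B ∩ t) {x : α} (hx : x ∈ s)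
    (hfx : f x ∈ t) : x ∈ A ↔ f x ∈ B :=
  calc x ∈ A ↔ x ∈ A ∩ s := (and_iff_left hx).symm
    _ ↔ f x ∈ f '' (A ∩ s) := (hf.mem_image_iff inter_subset_right hx).symm
    _ ↔ f x ∈ B := by rw [h, mem_inter_iff, and_iff_left hfx]

section

variable {V W : Type*} {G : SimpleGraph V} {H : SimpleGraph W} {X Z S : Set (V × V)}
  {Y : Set (W × W)} {p : V × V} {u : V}

namespace UnmarkedArrow

theorem swap (h : UnmarkedArrow G X p) : UnmarkedArrow G X p.swap :=
  ⟨h.1.symm, h.2.2, by rw [Prod.swap_swap]; exact h.2.1⟩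

theorem fst_mem (h : UnmarkedArrow G X p) : p.1 ∈ unmarkedVertSet G X :=
  ⟨p.2, h⟩

theorem snd_mem (h : UnmarkedArrow G X p) : p.2 ∈ unmarkedVertSet G X :=
  ⟨p.1, h.swap⟩

end UnmarkedArrow

theorem Follower.subset {Z' : Set (V × V)} (h : Follower G Z Z') : Z ⊆ Z' := by
  obtain ⟨-, -, p, -, rfl⟩ := h
  exact subset_insert p Z

theorem Descendent.subset {X' : Set (V × V)} (h : Descendent G X X') : X ⊆ X' := by
  induction h with
  | single h => exact h.subset
  | tail _ h ih => exact ih.trans h.subset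

theorem Descendent.isState {X' : Set (V × V)} (h : Descendent G X X') : IsState G X' := by
  obtain ⟨_, _, h⟩ := Relation.TransGen.tail'_iff.1 h
  exact h.2.1

namespace IsDecoration

theorem diff_subset_unmarked (hZ : IsDecoration G Z) (h : X ⊆ Z) :
    Z \ X ⊆ {p | UnmarkedArrow G X p} :=
  fun p ⟨hp, hpX⟩ => ⟨hZ.1 p hp, hpX, fun h' => hZ.2 p hp (h h')⟩

theorem union_iff (hX : IsDecoration G X) (hS : S ⊆ {p | UnmarkedArrow G X p}) :
    IsDecoration G (X ∪ S) ↔ ∀ p ∈ S, p.swap ∉ S := by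
  refine ⟨fun h p hp hp' => h.2 p (.inr hp) (.inr hp'), fun h => ⟨?_, ?_⟩⟩
  · rintro p (hp | hp)
    exacts [hX.1 p hp, (hS hp).1]
  · rintro p (hp | hp) (hp' | hp')
    · exact hX.2 p hp hp'
    · exact (hS hp').2.2 (by rwa [Prod.swap_swap])
    · exact (hS hp).2.2 hp'
    · exact h p hp hp'

theorem isSink_union_iff (hX : IsDecoration G X) (hS : S ⊆ {p | UnmarkedArrow G X p}) :
    IsSink G (X ∪ S) u ↔
      u ∉ tailSet X ∧ ∀ p, UnmarkedArrow G X p → p.2 = u → p ∈ S := by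
  constructor
  · intro h
    refine ⟨fun ⟨w, hw⟩ => ?_, ?_⟩
    · rcases h w (hX.1 _ hw).symm with h' | h'
      exacts [hX.2 _ hw h', (hS h').2.2 hw]
    · rintro ⟨v, _⟩ hp rfl
      exact (h v hp.1).resolve_left hp.2.1
  · rintro ⟨ht, hin⟩ v hv
    by_cases hvu : (v, u) ∈ X
    · exact .inl hvu
    · exact .inr (hin (v, u) ⟨hv, hvu, fun h => ht ⟨v, h⟩⟩ rfl)

theorem isSource_union_iff (hX : IsDecoration G X) (hS : S ⊆ {p | UnmarkedArrow G X p}) :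
    IsSource G (X ∪ S) u ↔
      u ∉ headSet X ∧ ∀ p, UnmarkedArrow G X p → p.1 = u → p ∈ S := by
  constructor
  · intro h
    refine ⟨fun ⟨w, hw⟩ => ?_, ?_⟩
    · rcases h w (hX.1 _ hw).symm with h' | h'
      exacts [hX.2 _ hw h', (hS h').2.2 hw]
    · rintro ⟨_, w⟩ hp rfl
      exact (h w hp.1).resolve_left hp.2.1
  · rintro ⟨ht, hout⟩ w hw
    by_cases huw : (u, w) ∈ X
    · exact .inl huw
    · exact .inr (hout (u, w) ⟨hw, huw, fun h => ht ⟨w, h⟩⟩ rfl)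

theorem isState_union_iff (hX : IsDecoration G X) (hS : S ⊆ {p | UnmarkedArrow G X p}) :
    IsState G (X ∪ S) ↔ (∀ p ∈ S, p.swap ∉ S) ∧ ∀ u,
      (u ∈ tailSet X ∪ leafSet G ∨ ∃ p, UnmarkedArrow G X p ∧ p.2 = u ∧ p ∉ S) ∧
      (u ∈ headSet X ∪ leafSet G ∨ ∃ p, UnmarkedArrow G X p ∧ p.1 = u ∧ p ∉ S) := by
  refine and_congr (hX.union_iff hS) (forall_congr' fun u => ?_)
  rw [hX.isSink_union_iff hS, hX.isSource_union_iff hS]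
  simp only [mem_union, leafSet, mem_ofPred_eq]
  push Not
  tauto

end IsDecoration

namespace IsState

theorem mem_union_leafSet_of_notMem (hX : IsState G X) (hu : u ∉ unmarkedVertSet G X) :
    u ∈ tailSet X ∪ leafSet G ∧ u ∈ headSet X ∪ leafSet G := by
  have h := ((hX.1.isState_union_iff (empty_subset _)).1 (by rwa [union_empty])).2 u
  exact ⟨h.1.resolve_right fun ⟨p, hp, hpu, _⟩ => hu (hpu ▸ hp.snd_mem),
    h.2.resolve_right fun ⟨p, hp, hpu, _⟩ => hu (hpu ▸ hp.fst_mem)⟩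

theorem isState_union_iff (hX : IsState G X) (hS : S ⊆ {p | UnmarkedArrow G X p}) :
    IsState G (X ∪ S) ↔ (∀ p ∈ S, p.swap ∉ S) ∧ ∀ u ∈ unmarkedVertSet G X,
      (u ∈ tailSet X ∪ leafSet G ∨ ∃ p, UnmarkedArrow G X p ∧ p.2 = u ∧ p ∉ S) ∧
      (u ∈ headSet X ∪ leafSet G ∨ ∃ p, UnmarkedArrow G X p ∧ p.1 = u ∧ p ∉ S) := by
  rw [hX.1.isState_union_iff hS]
  refine and_congr_right fun _ => ⟨fun h u _ => h u, fun h u => ?_⟩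
  by_cases hu : u ∈ unmarkedVertSet G X
  · exact h u hu
  · exact (hX.mem_union_leafSet_of_notMem hu).imp .inl .inl

end IsState

theorem aPlus_self (a : V × V → W × W) (X : Set (V × V)) (Y : Set (W × W)) :
    aPlus a X Y X = Y := by
  simp [aPlus]

theorem aPlus_insert (a : V × V → W × W) (Y : Set (W × W)) (hp : p ∉ X) :
    aPlus a X Y (insert p Z) = insert (a p) (aPlus a X Y Z) := by
  simp only [aPlus, insert_sdiff_of_notMem _ hp, image_insert_eq, union_insert]

/-- `f` is a graph isomorphism `U(X) ≅ U(Y)`. -/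
structure IsUnmarkedIso (G : SimpleGraph V) (H : SimpleGraph W) (X : Set (V × V))
    (Y : Set (W × W)) (f : V → W) : Prop where
  bijOn : BijOn f (unmarkedVertSet G X) (unmarkedVertSet H Y)
  unmarkedArrow_iff : ∀ v w, UnmarkedVert G X v → UnmarkedVert G X w →
    (UnmarkedArrow G X (v, w) ↔ UnmarkedArrow H Y (f v, f w))

namespace IsUnmarkedIso

variable {f : V → W}

theorem mapsTo (hf : IsUnmarkedIso G H X Y f) (hp : UnmarkedArrow G X p) :
    UnmarkedArrow H Y (Prod.map f f p) :=
  (hf.unmarkedArrow_iff p.1 p.2 hp.fst_mem hp.snd_mem).1 hp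

theorem bijOn_arrows (hf : IsUnmarkedIso G H X Y f) :
    BijOn (Prod.map f f) {p | UnmarkedArrow G X p} {q | UnmarkedArrow H Y q} := by
  refine ⟨fun p => hf.mapsTo, fun p hp q hq h => ?_, fun ⟨x, y⟩ hq => ?_⟩
  · exact Prod.ext (hf.bijOn.injOn hp.fst_mem hq.fst_mem (congrArg Prod.fst h))
      (hf.bijOn.injOn hp.snd_mem hq.snd_mem (congrArg Prod.snd h))
  · obtain ⟨v, hv, rfl⟩ : x ∈ f '' unmarkedVertSet G X := hf.bijOn.surjOn hq.fst_mem
    obtain ⟨w, hw, rfl⟩ : y ∈ f '' unmarkedVertSet G X := hf.bijOn.surjOn hq.snd_mem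
    exact ⟨(v, w), (hf.unmarkedArrow_iff v w hv hw).2 hq, rfl⟩

theorem mem_image_iff (hf : IsUnmarkedIso G H X Y f) (hS : S ⊆ {p | UnmarkedArrow G X p})
    (hp : UnmarkedArrow G X p) : Prod.map f f p ∈ Prod.map f f '' S ↔ p ∈ S :=
  hf.bijOn_arrows.injOn.mem_image_iff hS hp

theorem swap_notMem_image_iff (hf : IsUnmarkedIso G H X Y f)
    (hS : S ⊆ {p | UnmarkedArrow G X p}) :
    (∀ q ∈ Prod.map f f '' S, q.swap ∉ Prod.map f f '' S) ↔ ∀ p ∈ S, p.swap ∉ S := by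
  rw [forall_mem_image]
  exact forall₂_congr fun p hp => not_congr (hf.mem_image_iff hS (hS hp).swap)

theorem exists_unmarkedArrow_notMem_iff (hf : IsUnmarkedIso G H X Y f)
    (hS : S ⊆ {p | UnmarkedArrow G X p}) {P : V × V → Prop} {Q : W × W → Prop}
    (hPQ : ∀ p, UnmarkedArrow G X p → (P p ↔ Q (Prod.map f f p))) :
    (∃ p, UnmarkedArrow G X p ∧ P p ∧ p ∉ S) ↔
      ∃ q, UnmarkedArrow H Y q ∧ Q q ∧ q ∉ Prod.map f f '' S := by
  constructor
  · rintro ⟨p, hp, hP, hpS⟩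
    exact ⟨_, hf.mapsTo hp, (hPQ p hp).1 hP, (hf.mem_image_iff hS hp).not.2 hpS⟩
  · rintro ⟨q, hq, hQ, hqS⟩
    obtain ⟨p, hp, rfl⟩ := hf.bijOn_arrows.surjOn hq
    exact ⟨p, hp, (hPQ p hp).2 hQ, (hf.mem_image_iff hS hp).not.1 hqS⟩

theorem aPlus_sdiff (hf : IsUnmarkedIso G H X Y f) (hZ : Z \ X ⊆ {p | UnmarkedArrow G X p}) :
    aPlus (Prod.map f f) X Y Z \ Y = Prod.map f f '' (Z \ X) := by
  rw [aPlus, union_sdiff_left, sdiff_eq_left, disjoint_left]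
  rintro _ ⟨p, hp, rfl⟩
  exact (hf.mapsTo (hZ hp)).2.1

theorem aPlus_injOn (hf : IsUnmarkedIso G H X Y f) :
    InjOn (aPlus (Prod.map f f) X Y) {Z | X ⊆ Z ∧ Z \ X ⊆ {p | UnmarkedArrow G X p}} := by
  rintro Z₁ ⟨hXZ₁, hZ₁⟩ Z₂ ⟨hXZ₂, hZ₂⟩ h
  have hdiff : Z₁ \ X = Z₂ \ X := by
    rw [← hf.bijOn_arrows.injOn.image_eq_image_iff hZ₁ hZ₂, ← hf.aPlus_sdiff hZ₁,
      ← hf.aPlus_sdiff hZ₂, h]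
  rw [← union_sdiff_cancel hXZ₁, ← union_sdiff_cancel hXZ₂, hdiff]

end IsUnmarkedIso

/-- `f : U(X) ≅ U(Y)` with `f(h(X) ∪ L(G)) = h(Y) ∪ L(H)` and
`f(t(X) ∪ L(G)) = t(Y) ∪ L(H)`. -/
structure IsHeadTailIso (G : SimpleGraph V) (H : SimpleGraph W) (X : Set (V × V))
    (Y : Set (W × W)) (f : V → W) : Prop extends IsUnmarkedIso G H X Y f where
  image_heads : f '' ((headSet X ∪ leafSet G) ∩ unmarkedVertSet G X) =
    (headSet Y ∪ leafSet H) ∩ unmarkedVertSet H Y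
  image_tails : f '' ((tailSet X ∪ leafSet G) ∩ unmarkedVertSet G X) =
    (tailSet Y ∪ leafSet H) ∩ unmarkedVertSet H Y

namespace IsHeadTailIso

variable {f : V → W}

theorem vertex_condition_iff (hf : IsHeadTailIso G H X Y f)
    (hS : S ⊆ {p | UnmarkedArrow G X p}) (hu : u ∈ unmarkedVertSet G X) :
    ((u ∈ tailSet X ∪ leafSet G ∨ ∃ p, UnmarkedArrow G X p ∧ p.2 = u ∧ p ∉ S) ∧
      (u ∈ headSet X ∪ leafSet G ∨ ∃ p, UnmarkedArrow G X p ∧ p.1 = u ∧ p ∉ S)) ↔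
    ((f u ∈ tailSet Y ∪ leafSet H ∨
        ∃ q, UnmarkedArrow H Y q ∧ q.2 = f u ∧ q ∉ Prod.map f f '' S) ∧
      (f u ∈ headSet Y ∪ leafSet H ∨
        ∃ q, UnmarkedArrow H Y q ∧ q.1 = f u ∧ q ∉ Prod.map f f '' S)) := by
  have hinj := hf.bijOn.injOn
  have hfu := hf.bijOn.mapsTo hu
  exact and_congr
    (or_congr (hinj.mem_iff_of_image_inter_eq hf.image_tails hu hfu)
      (hf.exists_unmarkedArrow_notMem_iff hS fun p hp => (hinj.eq_iff hp.snd_mem hu).symm))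
    (or_congr (hinj.mem_iff_of_image_inter_eq hf.image_heads hu hfu)
      (hf.exists_unmarkedArrow_notMem_iff hS fun p hp => (hinj.eq_iff hp.fst_mem hu).symm))

theorem isState_union_iff (hf : IsHeadTailIso G H X Y f) (hX : IsState G X)
    (hY : IsState H Y) (hS : S ⊆ {p | UnmarkedArrow G X p}) :
    IsState G (X ∪ S) ↔ IsState H (Y ∪ Prod.map f f '' S) := by
  have hT : Prod.map f f '' S ⊆ {q | UnmarkedArrow H Y q} :=
    image_subset_iff.2 fun p hp => hf.mapsTo (hS hp)
  rw [hX.isState_union_iff hS, hY.isState_union_iff hT, hf.swap_notMem_image_iff hS,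
    ← hf.bijOn.image_eq, forall_mem_image]
  exact and_congr_right fun _ => forall₂_congr fun u hu => hf.vertex_condition_iff hS hu

theorem isState_iff_isState_aPlus (hf : IsHeadTailIso G H X Y f) (hX : IsState G X)
    (hY : IsState H Y) (hXZ : X ⊆ Z) (hZ : Z \ X ⊆ {p | UnmarkedArrow G X p}) :
    IsState G Z ↔ IsState H (aPlus (Prod.map f f) X Y Z) := by
  rw [aPlus, ← hf.isState_union_iff hX hY hZ, union_sdiff_cancel hXZ]

theorem follower_aPlus (hf : IsHeadTailIso G H X Y f) (hX : IsState G X) (hY : IsState H Y)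
    {Z₁ Z₂ : Set (V × V)} (hXZ : X ⊆ Z₁) (h : Follower G Z₁ Z₂) :
    Follower H (aPlus (Prod.map f f) X Y Z₁) (aPlus (Prod.map f f) X Y Z₂) := by
  obtain ⟨hZ₁, hZ₂, p, hp, rfl⟩ := h
  have hpX : p ∉ X := fun h => hp (hXZ h)
  have hXZ' : X ⊆ insert p Z₁ := hXZ.trans (subset_insert p Z₁)
  have hZ₁' := hZ₁.1.diff_subset_unmarked hXZ
  have hZ₂' := hZ₂.1.diff_subset_unmarked hXZ'
  refine ⟨(hf.isState_iff_isState_aPlus hX hY hXZ hZ₁').1 hZ₁,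
    (hf.isState_iff_isState_aPlus hX hY hXZ' hZ₂').1 hZ₂, Prod.map f f p, fun hmem => hp ?_,
    aPlus_insert _ Y hpX⟩
  have h : aPlus (Prod.map f f) X Y (insert p Z₁) = aPlus (Prod.map f f) X Y Z₁ := by
    rw [aPlus_insert _ Y hpX, insert_eq_of_mem hmem]
  exact hf.aPlus_injOn ⟨hXZ', hZ₂'⟩ ⟨hXZ, hZ₁'⟩ h ▸ mem_insert p Z₁

theorem exists_follower_aPlus (hf : IsHeadTailIso G H X Y f) (hX : IsState G X)
    (hY : IsState H Y) {Z₁ : Set (V × V)} {Z₂' : Set (W × W)} (hZ₁ : IsState G Z₁)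
    (hXZ : X ⊆ Z₁) (h : Follower H (aPlus (Prod.map f f) X Y Z₁) Z₂') :
    ∃ Z₂, Follower G Z₁ Z₂ ∧ aPlus (Prod.map f f) X Y Z₂ = Z₂' := by
  obtain ⟨-, hZ₂', q, hq, rfl⟩ := h
  have hYZ : Y ⊆ insert q (aPlus (Prod.map f f) X Y Z₁) :=
    subset_union_left.trans (subset_insert _ _)
  obtain ⟨p, hp, rfl⟩ := hf.bijOn_arrows.surjOn
    (hZ₂'.1.diff_subset_unmarked hYZ ⟨mem_insert _ _, fun h => hq (.inl h)⟩)
  have hpX : p ∉ X := hp.2.1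
  have hZ₂ : insert p Z₁ \ X ⊆ {p | UnmarkedArrow G X p} := by
    rw [insert_sdiff_of_notMem _ hpX]
    exact insert_subset hp (hZ₁.1.diff_subset_unmarked hXZ)
  refine ⟨insert p Z₁, ⟨hZ₁, ?_, p, fun h => hq (.inr ⟨p, ⟨h, hpX⟩, rfl⟩), rfl⟩,
    aPlus_insert _ Y hpX⟩
  rwa [hf.isState_iff_isState_aPlus hX hY (hXZ.trans (subset_insert p Z₁)) hZ₂,
    aPlus_insert _ Y hpX]

theorem mapsTo_descendent (hf : IsHeadTailIso G H X Y f) (hX : IsState G X)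
    (hY : IsState H Y) :
    MapsTo (aPlus (Prod.map f f) X Y) {X' | Descendent G X X'} {Y' | Descendent H Y Y'} := by
  intro X' h
  induction h with
  | single h =>
    exact .single (by simpa only [aPlus_self] using hf.follower_aPlus hX hY le_rfl h)
  | tail hd h ih => exact .tail ih (hf.follower_aPlus hX hY (Descendent.subset hd) h)

theorem surjOn_descendent (hf : IsHeadTailIso G H X Y f) (hX : IsState G X)
    (hY : IsState H Y) :
    SurjOn (aPlus (Prod.map f f) X Y) {X' | Descendent G X X'} {Y' | Descendent H Y Y'} := by
  intro Y' h
  induction h with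
  | single h =>
    obtain ⟨X', h', rfl⟩ :=
      hf.exists_follower_aPlus hX hY hX le_rfl (by rwa [aPlus_self])
    exact ⟨X', .single h', rfl⟩
  | tail _ h ih =>
    obtain ⟨X₁, hd, rfl⟩ := ih
    obtain ⟨X₂, h', rfl⟩ :=
      hf.exists_follower_aPlus hX hY (Descendent.isState hd) (Descendent.subset hd) h
    exact ⟨X₂, .tail hd h', rfl⟩

end IsHeadTailIso

end

theorem isStateIso_of_image_heads_tails_general {V W : Type*}
    (G : SimpleGraph V) (H : SimpleGraph W)
    (X : Set (V × V)) (Y : Set (W × W)) (hX : IsState G X) (hY : IsState H Y)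
    (f : V → W)
    (hfbij : Set.BijOn f (unmarkedVertSet G X) (unmarkedVertSet H Y))
    (hfadj : ∀ v w, UnmarkedVert G X v → UnmarkedVert G X w →
      (UnmarkedArrow G X (v, w) ↔ UnmarkedArrow H Y (f v, f w)))
    (hheads : f '' ((headSet X ∪ leafSet G) ∩ unmarkedVertSet G X) =
      (headSet Y ∪ leafSet H) ∩ unmarkedVertSet H Y)
    (htails : f '' ((tailSet X ∪ leafSet G) ∩ unmarkedVertSet G X) =
      (tailSet Y ∪ leafSet H) ∩ unmarkedVertSet H Y) :
    IsStateIso G H X Y (fun p => (f p.1, f p.2)) := by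
  have hf : IsHeadTailIso G H X Y f := ⟨⟨hfbij, hfadj⟩, hheads, htails⟩
  have hdesc : {X' | Descendent G X X'} ⊆ {Z | X ⊆ Z ∧ Z \ X ⊆ {p | UnmarkedArrow G X p}} :=
    fun _ h => ⟨h.subset, h.isState.1.diff_subset_unmarked h.subset⟩
  exact ⟨hf.bijOn_arrows, fun _ _ => rfl,
    ⟨hf.mapsTo_descendent hX hY, hf.aPlus_injOn.mono hdesc, hf.surjOn_descendent hX hY⟩⟩

/-- Sufficient criterion for a state isomorphism.  Let `X` and `Y` be states of
graphs `G` and `H`, and let `f` be a graph isomorphism from `U(X)` to `U(Y)`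
(a bijection on their vertex sets preserving the unmarked-adjacency relation in
both directions).  If `f(h(X) ∪ L(G)) = h(Y) ∪ L(H)` and
`f(t(X) ∪ L(G)) = t(Y) ∪ L(H)` (within the vertex sets of `U(X)` and `U(Y)`,
where `f` is defined), then the induced arrow map `a_f : (v,w) ↦ (f v, f w)`
is a state isomorphism from `X` to `Y`. -/
theorem isStateIso_of_image_heads_tails {V W : Type*} [Fintype V] [Fintype W]
    (G : SimpleGraph V) (H : SimpleGraph W)
    (hG : ∀ v, ∃ w, G.Adj v w) (hH : ∀ v, ∃ w, H.Adj v w)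
    (X : Set (V × V)) (Y : Set (W × W)) (hX : IsState G X) (hY : IsState H Y)
    (f : V → W)
    (hfbij : Set.BijOn f (unmarkedVertSet G X) (unmarkedVertSet H Y))
    (hfadj : ∀ v w, UnmarkedVert G X v → UnmarkedVert G X w →
      (UnmarkedArrow G X (v, w) ↔ UnmarkedArrow H Y (f v, f w)))
    (hheads : f '' ((headSet X ∪ leafSet G) ∩ unmarkedVertSet G X) =
      (headSet Y ∪ leafSet H) ∩ unmarkedVertSet H Y)
    (htails : f '' ((tailSet X ∪ leafSet G) ∩ unmarkedVertSet G X) =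
      (tailSet Y ∪ leafSet H) ∩ unmarkedVertSet H Y) :
    IsStateIso G H X Y (fun p => (f p.1, f p.2)) :=
  isStateIso_of_image_heads_tails_general G H X Y hX hY f hfbij hfadj hheads htails
end
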